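/- Let m, k be integers with 1 ≤ k < m, and let ḡ_{(m,k)} be the associated function on 𝔽_3^m. Then the real part of the Walsh transform of ḡ_{(m,k)} at the zero vector equals -3^m/2 + (3/2)·Σ_{j=0}^{k} 2^j·C(m, j). -/

import Mathlib

/-!
Since `Re ζ^v` is `1` for `v = 0` and `-1/2` otherwise, `Re ĥ(0) = (3/2)·#{h = 0} - 3^m/2` for
every `h`. For `ḡ_{(m,k)}` the zero set is the Hamming ball of radius `k`, whose size is read off
the weight enumerator `∑ₓ X^{wt x} = (1 + 2X)^m`.
-/

open Finset

/-- `ζ = exp(2πi/3)`, a primitive cube root of unity. -/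
noncomputable def zeta3 : ℂ := Complex.exp (2 * Real.pi * Complex.I / 3)

/-- The Walsh transform of `h : 𝔽_3^m → 𝔽_3` at `w ∈ 𝔽_3^m`:
`ĥ(w) = Σ_{x ∈ 𝔽_3^m} ζ^{h(x) - w·x}`. -/
noncomputable def walsh {m : ℕ} (h : (Fin m → ZMod 3) → ZMod 3)
    (w : Fin m → ZMod 3) : ℂ :=
  ∑ x : Fin m → ZMod 3, zeta3 ^ (h x - ∑ i, w i * x i).val

/-- The function `ḡ_{(m,k)} : 𝔽_3^m → 𝔽_3`: `1` if `wt(x) > k`, `0` if `wt(x) ≤ k`. -/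
def gbar {m : ℕ} (k : ℕ) (x : Fin m → ZMod 3) : ZMod 3 :=
  if k < hammingNorm x then 1 else 0

open Polynomial

theorem coeff_C_mul_X_add_one_pow {R : Type*} [CommSemiring R] (a : R) (n j : ℕ) :
    ((C a * X + 1) ^ n).coeff j = a ^ j * n.choose j := by
  simp only [add_pow, finsetSum_coeff, one_pow, mul_one, mul_pow, ← C_pow, ← C_eq_natCast,
    coeff_mul_C, coeff_C_mul_X_pow, ite_mul, zero_mul]
  rw [sum_ite_eq]
  split_ifs with hj
  · rfl
  · rw [Nat.choose_eq_zero_of_lt (by simpa using hj), Nat.cast_zero, mul_zero]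

section Hamming

variable {ι M : Type*} [Fintype ι] [DecidableEq ι] [Fintype M] [Zero M] [DecidableEq M]

theorem sum_X_pow_hammingNorm {R : Type*} [CommSemiring R] :
    ∑ x : ι → M, (X : R[X]) ^ hammingNorm x =
      (C ((Fintype.card M - 1 : ℕ) : R) * X + 1) ^ Fintype.card ι := by
  have hnorm (x : ι → M) : (X : R[X]) ^ hammingNorm x = ∏ i, X ^ (if x i = 0 then 0 else 1) := by
    rw [hammingNorm, card_filter, prod_pow_eq_pow_sum]
    simp only [ite_not]
  have hfactor : ∑ a : M, (X : R[X]) ^ (if a = 0 then 0 else 1) =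
      C ((Fintype.card M - 1 : ℕ) : R) * X + 1 := by
    rw [Fintype.sum_eq_add_sum_compl 0, if_pos rfl, pow_zero, add_comm,
      sum_congr rfl fun a ha => by rw [if_neg (by simpa using ha), pow_one], sum_const,
      card_compl, card_singleton, nsmul_eq_mul, C_eq_natCast]
  simp_rw [hnorm]
  rw [← Fintype.prod_sum (fun _ a => (X : R[X]) ^ if a = 0 then 0 else 1), hfactor, prod_const,
    card_univ]

theorem card_hammingNorm_eq (j : ℕ) :
    #{x : ι → M | hammingNorm x = j} = (Fintype.card M - 1) ^ j * (Fintype.card ι).choose j := by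
  have h := congrArg (coeff · j) (sum_X_pow_hammingNorm (ι := ι) (M := M) (R := ℕ))
  simp only [finsetSum_coeff, coeff_X_pow, coeff_C_mul_X_add_one_pow, Nat.cast_id] at h
  rw [card_filter, ← h]
  simp only [eq_comm]

theorem card_hammingNorm_le (k : ℕ) :
    #{x : ι → M | hammingNorm x ≤ k} =
      ∑ j ∈ range (k + 1), (Fintype.card M - 1) ^ j * (Fintype.card ι).choose j := by
  rw [card_eq_sum_card_fiberwise (f := hammingNorm) (t := range (k + 1))
    fun x hx => by simpa [Nat.lt_succ_iff] using hx]
  refine sum_congr rfl fun j hj => ?_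
  rw [filter_filter, ← card_hammingNorm_eq]
  congr 1
  ext x
  simp only [mem_filter, mem_univ, true_and, and_iff_right_iff_imp]
  rintro rfl
  exact Nat.lt_succ_iff.mp (mem_range.mp hj)

end Hamming

theorem re_zeta3_pow_val (v : ZMod 3) : (zeta3 ^ v.val).re = if v = 0 then 1 else -1 / 2 := by
  split_ifs with hv
  · simp [hv]
  have hval : v.val = 1 ∨ v.val = 2 := by
    have := ZMod.val_lt v
    have := (ZMod.val_ne_zero v).mpr hv
    omega
  have hre (n : ℕ) : (zeta3 ^ n).re = Real.cos (n * (2 * Real.pi / 3)) := by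
    rw [zeta3, ← Complex.exp_nat_mul, ← Complex.exp_ofReal_mul_I_re]
    push_cast
    ring_nf
  rcases hval with h | h <;> rw [h, hre] <;> push_cast
  · rw [show 1 * (2 * Real.pi / 3) = Real.pi - Real.pi / 3 by ring, Real.cos_pi_sub,
      Real.cos_pi_div_three]
    norm_num
  · rw [show 2 * (2 * Real.pi / 3) = Real.pi / 3 + Real.pi by ring, Real.cos_add_pi,
      Real.cos_pi_div_three]
    norm_num

theorem re_walsh_zero {m : ℕ} (h : (Fin m → ZMod 3) → ZMod 3) :
    (walsh h 0).re = 3 / 2 * #{x | h x = 0} - 3 ^ m / 2 := by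
  have hcompl : (#{x | h x = 0} : ℝ) + #{x | h x ≠ 0} = 3 ^ m := by
    have := card_filter_add_card_filter_not (s := univ) fun x => h x = 0
    rw [card_univ, Fintype.card_fun, ZMod.card, Fintype.card_fin] at this
    exact_mod_cast this
  simp only [walsh, Pi.zero_apply, zero_mul, sum_const_zero, sub_zero, Complex.re_sum,
    re_zeta3_pow_val, sum_ite, sum_const, nsmul_eq_mul, mul_one]
  linear_combination (-1/2 : ℝ) * hcompl

theorem gbar_eq_zero_iff {m k : ℕ} (x : Fin m → ZMod 3) : gbar k x = 0 ↔ hammingNorm x ≤ k := by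
  simp [gbar]

theorem stmt_13_general (m k : ℕ) :
    (walsh (gbar (m := m) k) 0).re =
      -(3 : ℝ) ^ m / 2 + 3 / 2 * ∑ j ∈ Finset.range (k + 1), (2 : ℝ) ^ j * (m.choose j : ℝ) := by
  simp_rw [re_walsh_zero, gbar_eq_zero_iff, card_hammingNorm_le, Fintype.card_fin, ZMod.card]
  push_cast
  ring

/-- For `1 ≤ k < m`,
`Re(ḡ̂_{(m,k)}(0)) = -3^m/2 + (3/2)·Σ_{j=0}^{k} 2^j·C(m,j)`. -/
theorem stmt_13 (m k : ℕ) (hk1 : 1 ≤ k) (hkm : k < m) :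
    (walsh (gbar (m := m) k) 0).re =
      -(3 : ℝ) ^ m / 2 + 3 / 2 * ∑ j ∈ Finset.range (k + 1), (2 : ℝ) ^ j * (m.choose j : ℝ) :=
  stmt_13_general m k
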